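/- For every real α > 1 there exist a number of jobs m, processing times p : Fin m → ℕ (all positive), and preferred schedules σ₁, σ₂ of two agents, such that: every schedule τ that is Pareto-consistent with the profile (σ₁, σ₂) satisfies max_{a∈{1,2}} T(τ, σ_a) > α · min over all schedules ρ of max_{a∈{1,2}} T(ρ, σ_a). -/

import Mathlib

/-- Completion time of job `i` in schedule `τ` (a bijection from jobs to positions),
with processing times `p`: the total processing time of jobs scheduled no later
than `i`. -/
def completionTime {m : ℕ} (p : Fin m → ℕ) (τ : Equiv.Perm (Fin m)) (i : Fin m) : ℕ :=
  ∑ j ∈ Finset.univ.filter (fun j => τ j ≤ τ i), p j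

/-- Tardiness cost of an agent with preferred schedule `σ` for the schedule `τ`:
`∑ i, max (0, C_i(τ) - C_i(σ))` (via truncated subtraction on ℕ). -/
def tardiness {m : ℕ} (p : Fin m → ℕ) (τ σ : Equiv.Perm (Fin m)) : ℕ :=
  ∑ i : Fin m, (completionTime p τ i - completionTime p σ i)

/-!
Take one long job `0` and `2t` unit jobs, and two agents who both want the long job first but
order the unit jobs in opposite ways. Running the long job last costs each agent only `2t`, so
the optimal maximum tardiness is at most `2t`. Pareto consistency forces the long job first;
then job `i` is late for agent `a` by exactly `τ i - σ_a i` (in positions), and since the two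
agents' positions for a job add up to at most `2t + 1`, the two tardinesses sum to at least
`∑ j, (2j - (2t + 1)) = t²`. Hence the maximum is at least `t² / 2 > α · 2t` once `t > 4α`.
-/

open Finset Equiv

variable {m n : ℕ}

lemma card_filter_apply_le_apply (τ : Perm (Fin m)) (i : Fin m) :
    #{j | τ j ≤ τ i} = τ i + 1 := by
  rw [← Fin.card_Iic (τ i)]
  exact card_bij' (fun j _ => τ j) (fun v _ => τ.symm v) (by simp) (by simp) (by simp) (by simp)

lemma completionTime_add (p q : Fin m → ℕ) (τ : Perm (Fin m)) (i : Fin m) :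
    completionTime (p + q) τ i = completionTime p τ i + completionTime q τ i :=
  sum_add_distrib

lemma completionTime_one (τ : Perm (Fin m)) (i : Fin m) : completionTime 1 τ i = τ i + 1 := by
  simp [completionTime, card_filter_apply_le_apply]

lemma completionTime_single (k : Fin m) (c : ℕ) (τ : Perm (Fin m)) (i : Fin m) :
    completionTime (Pi.single k c) τ i = if τ k ≤ τ i then c else 0 := by
  simp [completionTime, sum_pi_single']

lemma completionTime_one_add_single (k : Fin m) (L : ℕ) (τ : Perm (Fin m)) (i : Fin m) :
    completionTime (1 + Pi.single k L) τ i = τ i + 1 + if τ k ≤ τ i then L else 0 := by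
  rw [completionTime_add, completionTime_one, completionTime_single]

lemma apply_lt_apply_of_apply_eq_zero {σ : Perm (Fin (n + 1))} {k i : Fin (n + 1)}
    (hk : σ k = 0) (hi : i ≠ k) : σ k < σ i :=
  hk ▸ Fin.pos_of_ne_zero (hk ▸ σ.injective.ne hi)

lemma apply_eq_zero_of_forall_lt {τ : Perm (Fin (n + 1))} {k : Fin (n + 1)}
    (h : ∀ i ≠ k, τ k < τ i) : τ k = 0 := by
  by_contra hk
  have hne : τ.symm 0 ≠ k := fun h' => hk (by rw [← h', apply_symm_apply])
  simpa using h _ hne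

lemma tardiness_one_add_single_of_apply_eq_zero {k : Fin (n + 1)} (L : ℕ)
    {τ σ : Perm (Fin (n + 1))} (hτ : τ k = 0) (hσ : σ k = 0) :
    tardiness (1 + Pi.single k L) τ σ = ∑ i, ((τ i : ℕ) - σ i) := by
  refine sum_congr rfl fun i _ => ?_
  simp only [completionTime_one_add_single, hτ, hσ, Fin.zero_le, if_true]
  omega

lemma tardiness_one_add_single_of_apply_eq_last {k : Fin (n + 1)} {L : ℕ} (hnL : n ≤ L)
    {ρ σ : Perm (Fin (n + 1))} (hρ : ρ k = Fin.last n) (hσ : σ k = 0) :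
    tardiness (1 + Pi.single k L) ρ σ = n := by
  rw [tardiness, sum_eq_single k]
  · simp only [completionTime_one_add_single, hρ, hσ, le_refl, if_true, Fin.val_last, Fin.val_zero]
    omega
  -- In `ρ` a unit job finishes by time `n + 1 ≤ L + 1`, before any job finishes in `σ`.
  · intro i _ hik
    have hlt : ρ i < ρ k := hρ ▸ Fin.lt_last_iff_ne_last.2 (hρ ▸ ρ.injective.ne hik)
    have hn : (ρ i : ℕ) < n := by simpa [hρ, Fin.lt_def] using hlt
    simp only [completionTime_one_add_single, hσ, Fin.zero_le, if_true, not_le.2 hlt, if_false]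
    omega
  · simp

/-- Fixes job `0` and reverses the order of the jobs `1, …, n`. -/
def reverseTail (n : ℕ) : Perm (Fin (n + 1)) :=
  Perm.decomposeFin.symm (0, Fin.revPerm)

@[simp]
lemma reverseTail_zero : reverseTail n 0 = 0 :=
  Perm.decomposeFin_symm_apply_zero _ _

lemma val_add_reverseTail_le (i : Fin (n + 1)) : (i : ℕ) + reverseTail n i ≤ n + 1 := by
  cases i using Fin.cases with
  | zero => simp
  | succ j =>
    simp only [reverseTail, Perm.decomposeFin_symm_apply_succ, swap_self, refl_apply,
      Fin.revPerm_apply, Fin.val_succ, Fin.val_rev]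
    omega

lemma sum_range_two_mul_sub (t : ℕ) : ∑ j ∈ range (2 * t + 1), (2 * j - (2 * t + 1)) = t * t := by
  induction t with
  | zero => simp
  | succ t ih =>
    have hshift : ∀ j ∈ range (2 * (t + 1)),
        2 * (j + 1) - (2 * (t + 1) + 1) = 2 * j - (2 * t + 1) := fun j _ => by omega
    rw [sum_range_succ', sum_congr rfl hshift, show 2 * (t + 1) = 2 * t + 1 + 1 by ring,
      sum_range_succ, ih]
    ring_nf
    omega

lemma sum_range_le_tardiness_add_tardiness {L : ℕ} {k : Fin (n + 1)}
    {τ σ₁ σ₂ : Perm (Fin (n + 1))} (hτ : τ k = 0) (h₁ : σ₁ k = 0) (h₂ : σ₂ k = 0)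
    (hσ : ∀ i, (σ₁ i : ℕ) + σ₂ i ≤ n + 1) :
    ∑ j ∈ range (n + 1), (2 * j - (n + 1)) ≤
      tardiness (1 + Pi.single k L) τ σ₁ + tardiness (1 + Pi.single k L) τ σ₂ := by
  rw [tardiness_one_add_single_of_apply_eq_zero L hτ h₁,
    tardiness_one_add_single_of_apply_eq_zero L hτ h₂, ← sum_add_distrib,
    ← Fin.sum_univ_eq_sum_range (fun j => 2 * j - (n + 1)), ← Equiv.sum_comp τ]
  -- `(τ i - σ₁ i) + (τ i - σ₂ i) ≥ 2 τ i - (σ₁ i + σ₂ i)` in truncated arithmetic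
  exact sum_le_sum fun i _ => by have := hσ i; omega

/-- For every `α > 1` there is an instance (jobs with positive processing times and
two agents) on which every Pareto-consistent schedule has maximum tardiness strictly
larger than `α` times the minimum achievable maximum tardiness: no Pareto-efficient
rule is `α`-approximate for max-T. -/
theorem no_pareto_efficient_approx_max_tardiness (α : ℝ) (hα : 1 < α) :
    ∃ (m : ℕ) (p : Fin m → ℕ) (σ₁ σ₂ : Equiv.Perm (Fin m)),
      (∀ i, 0 < p i) ∧
      ∃ ρmin : Equiv.Perm (Fin m),
        (∀ ρ : Equiv.Perm (Fin m),
          max (tardiness p ρmin σ₁) (tardiness p ρmin σ₂)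
            ≤ max (tardiness p ρ σ₁) (tardiness p ρ σ₂)) ∧
        ∀ τ : Equiv.Perm (Fin m),
          (∀ k ℓ : Fin m, σ₁ k < σ₁ ℓ → σ₂ k < σ₂ ℓ → τ k < τ ℓ) →
          α * ((max (tardiness p ρmin σ₁) (tardiness p ρmin σ₂) : ℕ) : ℝ)
            < ((max (tardiness p τ σ₁) (tardiness p τ σ₂) : ℕ) : ℝ) := by
  obtain ⟨t, ht⟩ := exists_nat_gt (4 * α)
  set p : Fin (2 * t + 1) → ℕ := 1 + Pi.single 0 (2 * t)
  set σ₂ := reverseTail (2 * t)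
  set maxT := fun ρ => max (tardiness p ρ 1) (tardiness p ρ σ₂)
  obtain ⟨ρmin, hmin⟩ := Finite.exists_min maxT
  refine ⟨2 * t + 1, p, 1, σ₂, fun i => Nat.lt_add_right _ Nat.one_pos, ρmin, hmin, fun τ hτ => ?_⟩
  have hopt : maxT ρmin ≤ 2 * t :=
    have hlast : swap 0 (Fin.last (2 * t)) 0 = Fin.last (2 * t) := swap_apply_left _ _
    (hmin _).trans <| max_le (tardiness_one_add_single_of_apply_eq_last le_rfl hlast rfl).le
      (tardiness_one_add_single_of_apply_eq_last le_rfl hlast reverseTail_zero).le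
  have hτ0 : τ 0 = 0 := apply_eq_zero_of_forall_lt fun i hi =>
    hτ 0 i (apply_lt_apply_of_apply_eq_zero rfl hi)
      (apply_lt_apply_of_apply_eq_zero reverseTail_zero hi)
  have hpareto : t * t ≤ 2 * maxT τ := by
    have hsum := sum_range_le_tardiness_add_tardiness (L := 2 * t) (σ₁ := 1) hτ0 rfl
      reverseTail_zero val_add_reverseTail_le
    rw [sum_range_two_mul_sub] at hsum
    change t * t ≤ tardiness p τ 1 + tardiness p τ σ₂ at hsum
    simp only [maxT]
    omega
  have htpos : (0 : ℝ) < t := by linarith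
  have hoptR : (maxT ρmin : ℝ) ≤ 2 * t := by exact_mod_cast hopt
  have hparetoR : (t : ℝ) * t ≤ 2 * maxT τ := by exact_mod_cast hpareto
  calc α * maxT ρmin ≤ α * (2 * t) := by gcongr
    _ = 4 * α * t / 2 := by ring
    _ < t * t / 2 := by gcongr
    _ ≤ maxT τ := by linarith
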